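/- arXiv:1903.00429 — 2 statements merged into one kernel-verified Lean document; each statement's English description precedes it below -/
import Mathlib

section
/- Let u₀, v₀ ∈ C be arbitrary and let (u(t))_{t≥0}, (v(t))_{t≥0} be Obstacle Gradient Flows with initial data u₀ and v₀ respectively. Then for all t ≥ 0, ‖u(t) − v(t)‖ ≤ ‖u₀ − v₀‖ · exp( t · ζ( ‖u₀‖ + ‖v₀‖ + 2√(max{E(u₀), E(v₀)} − α) · √t ) ). In particular, if u₀ = v₀ then u ≡ v (Obstacle Gradient Flows are unique). -/
/-!
Testing the variational inequality at time `r` with the past states `u y`, `y < r`, gives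
`‖u'‖² + ⟪∇E(u), u'⟫ ≤ 0` a.e. Since `E ∘ u` is absolutely continuous this integrates to
`∫₀ᵗ ‖u'‖² ≤ E(u₀) - α`, and Cauchy–Schwarz keeps `u` in the ball of radius
`‖u₀‖ + √(E(u₀) - α) √t` on `[0, t]`. Testing the inequality for `u` with `v(r)` and the one
for `v` with `u(r)` gives `(‖u - v‖²)' ≤ 2⟪∇E(v) - ∇E(u), u - v⟫ ≤ 2 ζ(R) ‖u - v‖²` a.e.,
where `R` bounds `‖u‖ + ‖v‖` on `[0, t]`, and Gronwall's lemma for the absolutely continuous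
function `‖u - v‖²` concludes.
-/

open MeasureTheory Set Filter

noncomputable section

local notation "⟪" x ", " y "⟫" => @inner ℝ _ _ x y

variable {H : Type*} [NormedAddCommGroup H] [InnerProductSpace ℝ H] [CompleteSpace H]

/-- Assumption 1: `E` is Fréchet differentiable with (Riesz) gradient `E'`, the gradient is
locally Lipschitz, `E` is sequentially weakly lower semicontinuous, bounded below by `α`,
and the gradient is bounded on balls. -/
structure Assumption1 (E : H → ℝ) (E' : H → H) (α : ℝ) : Prop where
  grad : ∀ u : H, HasGradientAt E (E' u) u
  locLip : LocallyLipschitz E'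
  wlsc : ∀ (x : ℕ → H) (y : H),
    (∀ φ : H, Tendsto (fun n => ⟪x n, φ⟫) atTop (nhds ⟪y, φ⟫)) →
    E y ≤ Filter.liminf (fun n => E (x n)) atTop
  lowerBound : ∀ u : H, α ≤ E u
  gradBdd : ∀ R : ℝ, 0 < R → ∃ M : ℝ, ∀ w : H, ‖w‖ ≤ R → ‖E' w‖ ≤ M

/-- An Obstacle Gradient Flow `u` (with a.e. derivative `u'`) with initial datum `u₀ ∈ C`. -/
structure IsOGF (C : Set H) (E' : H → H) (u u' : ℝ → H) (u₀ : H) : Prop where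
  init : u 0 = u₀
  mem : ∀ t : ℝ, 0 ≤ t → u t ∈ C
  derivAe : ∀ᵐ t ∂(volume.restrict (Ioi (0:ℝ))), HasDerivAt u (u' t) t
  sqInt : ∀ T : ℝ, 0 < T → IntegrableOn (fun t => ‖u' t‖ ^ 2) (Ioc 0 T)
  ftc : ∀ s t : ℝ, 0 ≤ s → s ≤ t → u t - u s = ∫ r in s..t, u' r
  fvi : ∀ᵐ t ∂(volume.restrict (Ioi (0:ℝ))),
    ∀ v ∈ C, 0 ≤ ⟪u' t, v - u t⟫ + ⟪E' (u t), v - u t⟫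

/-- Assumption 2: a gradient growth condition with a nondecreasing continuous modulus `ζ`. -/
structure Assumption2 (E' : H → H) (ζ : ℝ → ℝ) : Prop where
  mono : MonotoneOn ζ (Ici 0)
  cont : ContinuousOn ζ (Ici 0)
  nonneg : ∀ r : ℝ, 0 ≤ r → 0 ≤ ζ r
  bound : ∀ u v : H, ‖E' u - E' v‖ ≤ ζ (‖u‖ + ‖v‖) * ‖u - v‖

open Topology

namespace AbsolutelyContinuousOnInterval

variable {X Y : Type*} [PseudoMetricSpace X] [PseudoMetricSpace Y] {a b : ℝ}

theorem of_dist_le_mul {f : ℝ → X} {g : ℝ → Y} (hg : AbsolutelyContinuousOnInterval g a b)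
    (K : ℝ) (h : ∀ x ∈ uIcc a b, ∀ y ∈ uIcc a b, dist (f x) (f y) ≤ K * dist (g x) (g y)) :
    AbsolutelyContinuousOnInterval f a b := by
  have hK : Tendsto (fun E : ℕ × (ℕ → ℝ × ℝ) ↦
      K * ∑ i ∈ Finset.range E.1, dist (g (E.2 i).1) (g (E.2 i).2))
      (totalLengthFilter ⊓ 𝓟 (disjWithin a b)) (𝓝 0) := by
    simpa only [mul_zero] using Tendsto.const_mul K hg
  refine squeeze_zero' (.of_forall fun _ ↦ Finset.sum_nonneg fun _ _ ↦ dist_nonneg) ?_ hK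
  rw [eventually_inf_principal]
  filter_upwards with E hE
  rw [Finset.mul_sum]
  exact Finset.sum_le_sum fun i hi ↦ h _ (hE.1 i hi).1 _ (hE.1 i hi).2

theorem _root_.LipschitzOnWith.comp_absolutelyContinuousOnInterval {F : X → Y} {K : NNReal}
    {s : Set X} (hF : LipschitzOnWith K F s) {f : ℝ → X} (hf : AbsolutelyContinuousOnInterval f a b)
    (hfs : MapsTo f (uIcc a b) s) : AbsolutelyContinuousOnInterval (F ∘ f) a b :=
  hf.of_dist_le_mul K fun _ hx _ hy ↦ hF.dist_le_mul _ (hfs hx) _ (hfs hy)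

theorem sub_le_integral_of_hasDerivAt_le {f f' g : ℝ → ℝ} (hab : a ≤ b)
    (hf : AbsolutelyContinuousOnInterval f a b) (hg : IntervalIntegrable g volume a b)
    (hf' : ∀ᵐ x, x ∈ Ioo a b → HasDerivAt f (f' x) x ∧ f' x ≤ g x) :
    f b - f a ≤ ∫ x in a..b, g x := by
  rw [← hf.integral_deriv_eq_sub]
  refine intervalIntegral.integral_mono_ae_restrict hab hf.intervalIntegrable_deriv hg ?_
  have hb : ∀ᵐ x : ℝ, x ≠ b := by simp [ae_iff, measure_singleton]
  have ha : ∀ᵐ x : ℝ, x ≠ a := by simp [ae_iff, measure_singleton]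
  rw [EventuallyLE, ae_restrict_iff' measurableSet_Icc]
  filter_upwards [hf', ha, hb] with x hx hxa hxb hmem
  obtain ⟨hd, hle⟩ := hx ⟨lt_of_le_of_ne hmem.1 hxa.symm, lt_of_le_of_ne hmem.2 hxb⟩
  exact hd.deriv ▸ hle

theorem le_mul_exp_of_hasDerivAt_le {f f' : ℝ → ℝ} {K : ℝ} (hab : a ≤ b)
    (hf : AbsolutelyContinuousOnInterval f a b)
    (hf' : ∀ᵐ x, x ∈ Ioo a b → HasDerivAt f (f' x) x ∧ f' x ≤ K * f x) :
    f b ≤ f a * Real.exp (K * (b - a)) := by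
  have hexp : AbsolutelyContinuousOnInterval (fun x ↦ Real.exp (-K * x)) a b :=
    (by fun_prop : ContDiff ℝ 1 fun x ↦ Real.exp (-K * x)).contDiffOn
      |>.absolutelyContinuousOnInterval
  have hdecay := (hexp.fun_mul hf).sub_le_integral_of_hasDerivAt_le hab
    (f' := fun x ↦ Real.exp (-K * x) * (f' x - K * f x)) (g := fun _ ↦ 0)
    intervalIntegrable_const ?_
  · rw [intervalIntegral.integral_zero, sub_nonpos] at hdecay
    calc f b = Real.exp (K * b) * (Real.exp (-K * b) * f b) := by
          rw [← mul_assoc, ← Real.exp_add]; simp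
      _ ≤ Real.exp (K * b) * (Real.exp (-K * a) * f a) := by gcongr
      _ = f a * Real.exp (K * (b - a)) := by rw [← mul_assoc, ← Real.exp_add]; ring_nf
  · filter_upwards [hf'] with x hx hmem
    obtain ⟨hd, hle⟩ := hx hmem
    refine ⟨(((hasDerivAt_id x).const_mul (-K)).exp.mul hd).congr_deriv (by simp; ring), ?_⟩
    exact mul_nonpos_of_nonneg_of_nonpos (Real.exp_pos _).le (by linarith)

end AbsolutelyContinuousOnInterval

theorem memLp_two_norm_of_integrable_sq_norm {α E : Type*} [MeasurableSpace α] {μ : Measure α}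
    [NormedAddCommGroup E] {g : α → E} (hg : Integrable (fun x ↦ ‖g x‖ ^ 2) μ) :
    MemLp (fun x ↦ ‖g x‖) 2 μ := by
  have hm : AEStronglyMeasurable (fun x ↦ ‖g x‖) μ := by
    simpa [Real.sqrt_sq (norm_nonneg _)] using
      Real.continuous_sqrt.comp_aestronglyMeasurable hg.aestronglyMeasurable
  exact (memLp_two_iff_integrable_sq hm).2 hg

theorem sq_intervalIntegral_norm_le {E : Type*} [NormedAddCommGroup E] {g : ℝ → E} {a b : ℝ}
    (hab : a ≤ b) (hg : IntegrableOn (fun x ↦ ‖g x‖ ^ 2) (Ioc a b)) :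
    (∫ x in a..b, ‖g x‖) ^ 2 ≤ (b - a) * ∫ x in a..b, ‖g x‖ ^ 2 := by
  have hL2 := memLp_two_norm_of_integrable_sq_norm hg
  have hholder := integral_mul_le_Lp_mul_Lq_of_nonneg (μ := volume.restrict (Ioc a b))
    Real.HolderConjugate.two_two (f := fun _ ↦ (1 : ℝ)) (g := fun x ↦ ‖g x‖)
    (.of_forall fun _ ↦ zero_le_one) (.of_forall fun _ ↦ norm_nonneg _)
    (by simpa using memLp_const (1 : ℝ)) (by simpa using hL2)
  simp only [one_mul, integral_const, smul_eq_mul, one_pow, mul_one, Real.rpow_two,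
    ← Real.sqrt_eq_rpow, measureReal_restrict_apply_univ, Real.volume_real_Ioc_of_le hab] at hholder
  rw [← Real.sqrt_mul (by linarith)] at hholder
  rw [intervalIntegral.integral_of_le hab, intervalIntegral.integral_of_le hab]
  exact (Real.le_sqrt (integral_nonneg fun _ ↦ norm_nonneg _)
    (mul_nonneg (by linarith) (integral_nonneg fun _ ↦ sq_nonneg _))).1 hholder

theorem Assumption1.exists_lipschitzOnWith_closedBall {E : H → ℝ} {E' : H → H} {α : ℝ}
    (hE : Assumption1 E E' α) (R : ℝ) : ∃ K, LipschitzOnWith K E (Metric.closedBall 0 R) := by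
  obtain ⟨M, hM⟩ := hE.gradBdd (max R 1) (by positivity)
  refine ⟨M.toNNReal, (convex_closedBall 0 R).lipschitzOnWith_of_nnnorm_hasFDerivWithin_le
    (fun x _ ↦ (hE.grad x).hasFDerivAt.hasFDerivWithinAt) fun x hx ↦ ?_⟩
  rw [← NNReal.coe_le_coe, coe_nnnorm, LinearIsometryEquiv.norm_map]
  exact (hM x ((mem_closedBall_zero_iff.1 hx).trans (le_max_left _ _))).trans (le_max_left _ _)

namespace IsOGF

variable {V : Type*} [NormedAddCommGroup V] [InnerProductSpace ℝ V]
  {C : Set V} {E' : V → V} {u u' v v' : ℝ → V} {u₀ v₀ : V}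

theorem norm_sub_le_integral (hu : IsOGF C E' u u' u₀) {s t : ℝ} (hs : 0 ≤ s) (hst : s ≤ t) :
    ‖u t - u s‖ ≤ ∫ r in s..t, ‖u' r‖ :=
  hu.ftc s t hs hst ▸ intervalIntegral.norm_integral_le_integral_norm hst

theorem absolutelyContinuousOnInterval (hu : IsOGF C E' u u' u₀) {t : ℝ} (ht : 0 < t) :
    AbsolutelyContinuousOnInterval u 0 t := by
  have hint : IntervalIntegrable (fun r ↦ ‖u' r‖) volume 0 t :=
    (intervalIntegrable_iff_integrableOn_Ioc_of_le ht.le).2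
      ((memLp_two_norm_of_integrable_sq_norm (hu.sqInt t ht)).integrable one_le_two)
  refine (hint.absolutelyContinuousOnInterval_intervalIntegral left_mem_uIcc).of_dist_le_mul 1
    fun x hx y hy ↦ ?_
  wlog hxy : x ≤ y generalizing x y
  · rw [dist_comm, dist_comm (∫ r in (0 : ℝ)..x, _)]
    exact this y hy x hx (le_of_not_ge hxy)
  have hx0 : 0 ≤ x := by rw [uIcc_of_le ht.le] at hx; exact hx.1
  have hsplit : (∫ r in (0 : ℝ)..y, ‖u' r‖) - ∫ r in (0 : ℝ)..x, ‖u' r‖ = ∫ r in x..y, ‖u' r‖ :=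
    intervalIntegral.integral_interval_sub_left (hint.mono_set (uIcc_subset_uIcc_left hy))
      (hint.mono_set (uIcc_subset_uIcc_left hx))
  rw [one_mul, dist_comm, dist_eq_norm, dist_comm, Real.dist_eq, hsplit]
  exact (hu.norm_sub_le_integral hx0 hxy).trans (le_abs_self _)

theorem norm_deriv_sq_add_inner_nonpos (hu : IsOGF C E' u u' u₀) :
    ∀ᵐ r ∂volume.restrict (Ioi 0), ‖u' r‖ ^ 2 + ⟪E' (u r), u' r⟫ ≤ 0 := by
  filter_upwards [hu.derivAe, hu.fvi, ae_restrict_mem measurableSet_Ioi] with r hd hvi hr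
  have hpast : ∀ y ∈ Ioo 0 r, ⟪u' r + E' (u r), slope u r y⟫ ≤ 0 := fun y hy ↦ by
    have hy' := hvi (u y) (hu.mem y hy.1.le)
    rw [slope_def_module, real_inner_smul_right, inner_add_left]
    exact mul_nonpos_of_nonpos_of_nonneg (inv_nonpos.2 (by linarith [hy.2])) hy'
  have hleft : Tendsto (slope u r) (𝓝[Ioo 0 r] r) (𝓝 (u' r)) :=
    (hasDerivAt_iff_tendsto_slope.1 hd).mono_left
      (nhdsWithin_mono r fun y hy ↦ (ne_of_lt (hy : y ∈ Ioo 0 r).2))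
  have : (𝓝[Ioo 0 r] r).NeBot := right_nhdsWithin_Ioo_neBot hr
  have hlim : ⟪u' r + E' (u r), u' r⟫ ≤ 0 :=
    le_of_tendsto (((continuous_const.inner continuous_id).tendsto _).comp hleft)
      (eventually_mem_nhdsWithin.mono hpast)
  rwa [inner_add_left, real_inner_self_eq_norm_sq] at hlim

theorem integral_norm_deriv_sq_le [CompleteSpace V] {E : V → ℝ} {α : ℝ}
    (hE : Assumption1 E E' α) (hu : IsOGF C E' u u' u₀) {t : ℝ} (ht : 0 < t) :
    ∫ r in 0..t, ‖u' r‖ ^ 2 ≤ E u₀ - α := by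
  have hac := hu.absolutelyContinuousOnInterval ht
  obtain ⟨R, hR⟩ := hac.exists_bound
  obtain ⟨K, hK⟩ := hE.exists_lipschitzOnWith_closedBall R
  have hEac : AbsolutelyContinuousOnInterval (E ∘ u) 0 t :=
    hK.comp_absolutelyContinuousOnInterval hac fun r hr ↦ mem_closedBall_zero_iff.2 (hR r hr)
  have hdecay := hEac.sub_le_integral_of_hasDerivAt_le ht.le
    (f' := fun r ↦ ⟪E' (u r), u' r⟫) (g := fun r ↦ -‖u' r‖ ^ 2)
    ((intervalIntegrable_iff_integrableOn_Ioc_of_le ht.le).2 (hu.sqInt t ht).neg) ?_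
  · rw [intervalIntegral.integral_neg, Function.comp_apply, Function.comp_apply, hu.init] at hdecay
    linarith [hE.lowerBound (u t)]
  · filter_upwards [(ae_restrict_iff' measurableSet_Ioi).1
      (hu.derivAe.and hu.norm_deriv_sq_add_inner_nonpos)] with r hr hrt
    obtain ⟨hd, hdiss⟩ := hr hrt.1
    refine ⟨?_, by linarith⟩
    simpa using (hE.grad (u r)).hasFDerivAt.comp_hasDerivAt r hd

theorem norm_le_add_sqrt_mul_sqrt (hu : IsOGF C E' u u' u₀) {t D : ℝ} (ht : 0 < t)
    (hD : ∫ r in 0..t, ‖u' r‖ ^ 2 ≤ D) {r : ℝ} (hr : r ∈ Icc 0 t) :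
    ‖u r‖ ≤ ‖u₀‖ + √D * √t := by
  have hsq : ∫ s in 0..r, ‖u' s‖ ^ 2 ≤ D :=
    (intervalIntegral.integral_mono_interval le_rfl hr.1 hr.2
      (.of_forall fun _ ↦ sq_nonneg _)
      ((intervalIntegrable_iff_integrableOn_Ioc_of_le ht.le).2 (hu.sqInt t ht))).trans hD
  have hsq0 : 0 ≤ ∫ s in 0..r, ‖u' s‖ ^ 2 :=
    intervalIntegral.integral_nonneg hr.1 fun _ _ ↦ sq_nonneg _
  have hcs : (∫ s in 0..r, ‖u' s‖) ^ 2 ≤ t * D :=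
    calc _ ≤ (r - 0) * ∫ s in 0..r, ‖u' s‖ ^ 2 :=
          sq_intervalIntegral_norm_le hr.1 ((hu.sqInt t ht).mono_set (Ioc_subset_Ioc le_rfl hr.2))
      _ ≤ t * D := by rw [sub_zero]; exact mul_le_mul hr.2 hsq hsq0 ht.le
  calc ‖u r‖ ≤ ‖u 0‖ + ‖u r - u 0‖ := norm_le_insert' _ _
    _ ≤ ‖u₀‖ + ∫ s in 0..r, ‖u' s‖ := by
        rw [hu.init]; gcongr; exact hu.init ▸ hu.norm_sub_le_integral le_rfl hr.1
    _ ≤ ‖u₀‖ + √D * √t := by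
        rw [← Real.sqrt_mul (hsq0.trans hsq), mul_comm D]
        gcongr
        exact Real.le_sqrt_of_sq_le hcs

theorem inner_deriv_sub_le (hu : IsOGF C E' u u' u₀) (hv : IsOGF C E' v v' v₀) :
    ∀ᵐ r ∂volume.restrict (Ioi 0),
      ⟪u' r - v' r, u r - v r⟫ ≤ ⟪E' (v r) - E' (u r), u r - v r⟫ := by
  filter_upwards [hu.fvi, hv.fvi, ae_restrict_mem measurableSet_Ioi] with r hur hvr hr
  have h₁ := hur (v r) (hv.mem r (le_of_lt hr))
  have h₂ := hvr (u r) (hu.mem r (le_of_lt hr))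
  rw [← neg_sub (u r) (v r), inner_neg_right, inner_neg_right] at h₁
  simp only [inner_sub_left] at h₁ h₂ ⊢
  linarith

theorem norm_sub_le_mul_exp (hu : IsOGF C E' u u' u₀) (hv : IsOGF C E' v v' v₀) {t K : ℝ}
    (ht : 0 < t) (hK : ∀ r ∈ Icc 0 t, ‖E' (u r) - E' (v r)‖ ≤ K * ‖u r - v r‖) :
    ‖u t - v t‖ ≤ ‖u₀ - v₀‖ * Real.exp (K * t) := by
  have hwac : AbsolutelyContinuousOnInterval (fun r ↦ ‖u r - v r‖) 0 t :=
    (lipschitzWith_one_norm.lipschitzOnWith (s := univ)).comp_absolutelyContinuousOnInterval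
      ((hu.absolutelyContinuousOnInterval ht).sub (hv.absolutelyContinuousOnInterval ht))
      (mapsTo_univ _ _)
  have hsq := (hwac.fun_mul hwac).le_mul_exp_of_hasDerivAt_le ht.le (K := 2 * K)
    (f' := fun r ↦ 2 * ⟪u r - v r, u' r - v' r⟫) ?_
  · have hexp : Real.exp (2 * K * (t - 0)) = Real.exp (K * t) * Real.exp (K * t) := by
      rw [← Real.exp_add]; ring_nf
    rw [hexp, hu.init, hv.init] at hsq
    refine (mul_self_le_mul_self_iff (norm_nonneg _) (by positivity)).2 (hsq.trans_eq ?_)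
    ring
  · filter_upwards [(ae_restrict_iff' measurableSet_Ioi).1
      ((hu.derivAe.and hv.derivAe).and (hu.inner_deriv_sub_le hv))] with r hr hrt
    obtain ⟨⟨hdu, hdv⟩, hmono⟩ := hr hrt.1
    refine ⟨by simpa only [sq, Pi.sub_apply] using (hdu.sub hdv).norm_sq, ?_⟩
    have hlip : ⟪E' (v r) - E' (u r), u r - v r⟫ ≤ K * ‖u r - v r‖ * ‖u r - v r‖ := by
      calc _ ≤ ‖E' (v r) - E' (u r)‖ * ‖u r - v r‖ := real_inner_le_norm _ _
        _ ≤ _ := by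
          rw [norm_sub_rev]
          exact mul_le_mul_of_nonneg_right (hK r (Ioo_subset_Icc_self hrt)) (norm_nonneg _)
    rw [real_inner_comm]
    linarith

end IsOGF

theorem uniqueness_and_continuous_dependence_general
    (E : H → ℝ) (E' : H → H) (α : ℝ) (hE : Assumption1 E E' α)
    (ζ : ℝ → ℝ) (hζ : Assumption2 E' ζ)
    (C : Set H)
    (u u' v v' : ℝ → H) (u₀ v₀ : H)
    (hu : IsOGF C E' u u' u₀) (hv : IsOGF C E' v v' v₀) :
    (∀ t : ℝ, 0 ≤ t →
      ‖u t - v t‖ ≤ ‖u₀ - v₀‖ *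
        Real.exp (t * ζ (‖u₀‖ + ‖v₀‖ +
          2 * Real.sqrt (max (E u₀) (E v₀) - α) * Real.sqrt t))) ∧
    (u₀ = v₀ → ∀ t : ℝ, 0 ≤ t → u t = v t) := by
  have hstab : ∀ t : ℝ, 0 ≤ t → ‖u t - v t‖ ≤ ‖u₀ - v₀‖ *
      Real.exp (t * ζ (‖u₀‖ + ‖v₀‖ + 2 * √(max (E u₀) (E v₀) - α) * √t)) := by
    intro t ht
    rcases ht.eq_or_lt with rfl | ht
    · simp [hu.init, hv.init]
    set D := max (E u₀) (E v₀) - α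
    have hDu : ∫ r in 0..t, ‖u' r‖ ^ 2 ≤ D :=
      (hu.integral_norm_deriv_sq_le hE ht).trans (by simp only [D]; gcongr; exact le_max_left _ _)
    have hDv : ∫ r in 0..t, ‖v' r‖ ^ 2 ≤ D :=
      (hv.integral_norm_deriv_sq_le hE ht).trans (by simp only [D]; gcongr; exact le_max_right _ _)
    rw [mul_comm t]
    refine hu.norm_sub_le_mul_exp hv ht fun r hr ↦ (hζ.bound _ _).trans ?_
    gcongr
    exact hζ.mono (mem_Ici.2 (by positivity)) (mem_Ici.2 (by positivity))
      (by linarith [hu.norm_le_add_sqrt_mul_sqrt ht hDu hr, hv.norm_le_add_sqrt_mul_sqrt ht hDv hr])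
  refine ⟨hstab, fun h t ht ↦ ?_⟩
  simpa [h, sub_eq_zero] using hstab t ht

/-- **Uniqueness and continuous dependence.** For Obstacle Gradient Flows `u, v` with initial
data `u₀, v₀` one has
`‖u(t) - v(t)‖ ≤ ‖u₀ - v₀‖ · exp(t·ζ(‖u₀‖ + ‖v₀‖ + 2√(max{E(u₀),E(v₀)} - α)·√t))`;
in particular flows are unique. -/
theorem uniqueness_and_continuous_dependence
    (E : H → ℝ) (E' : H → H) (α : ℝ) (hE : Assumption1 E E' α)
    (ζ : ℝ → ℝ) (hζ : Assumption2 E' ζ)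
    (C : Set H) (hCne : C.Nonempty) (hCcl : IsClosed C) (hCcv : Convex ℝ C)
    (u u' v v' : ℝ → H) (u₀ v₀ : H) (hu₀ : u₀ ∈ C) (hv₀ : v₀ ∈ C)
    (hu : IsOGF C E' u u' u₀) (hv : IsOGF C E' v v' v₀) :
    (∀ t : ℝ, 0 ≤ t →
      ‖u t - v t‖ ≤ ‖u₀ - v₀‖ *
        Real.exp (t * ζ (‖u₀‖ + ‖v₀‖ +
          2 * Real.sqrt (max (E u₀) (E v₀) - α) * Real.sqrt t))) ∧
    (u₀ = v₀ → ∀ t : ℝ, 0 ≤ t → u t = v t) :=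
  uniqueness_and_continuous_dependence_general E E' α hE ζ hζ C u u' v v' u₀ v₀ hu hv
end
end

section
/- Let (u_{kτ})_{k∈ℕ, τ∈(0,1)} be a family of minimizing movement sequences starting at u₀ ∈ C. Then for each T > 0 there exists a constant C_T = C_T(E, u₀, T) > 0 such that for all τ ∈ (0,1) and all k ∈ ℕ with (k+1)τ ≤ T one has (E(u_{kτ}) − E(u_{(k+1)τ}))/τ ≤ C_T. -/
/-!
Comparing the minimizer `u_{(k+1)τ}` with the competitor `u_{kτ}` gives
`‖u_{(k+1)τ} - u_{kτ}‖² ≤ 2τ (E(u_{kτ}) - E(u_{(k+1)τ}))`. Summing and using `E ≥ α`, the squared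
increments up to step `n` add up to at most `2τ (E(u₀) - α)`, so by Cauchy–Schwarz
`‖u_{nτ} - u₀‖ ≤ √(2nτ (E(u₀) - α))`: all iterates with `nτ ≤ T` stay in a fixed ball. There `∇E`
is bounded by some `M`, so by the mean value theorem the energy drop `d` of one step is at most
`M ‖u_{(k+1)τ} - u_{kτ}‖ ≤ M √(2τ d)`, whence `d ≤ 2M²τ`.
-/

open MeasureTheory Set Filter

noncomputable section

local notation "⟪" x ", " y "⟫" => @inner ℝ _ _ x y

variable {H : Type*} [NormedAddCommGroup H] [InnerProductSpace ℝ H] [CompleteSpace H]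

/-- A minimizing movement sequence with stepwidth `τ` starting at `u₀ ∈ C`: each
`us (k+1)` minimizes `Φ_{us k, τ}` over `C`. -/
def IsMinMovSeq (E : H → ℝ) (C : Set H) (τ : ℝ) (us : ℕ → H) (u₀ : H) : Prop :=
  us 0 = u₀ ∧ ∀ k : ℕ, us (k + 1) ∈ C ∧
    ∀ z ∈ C, ‖us (k + 1) - us k‖ ^ 2 / (2 * τ) + E (us (k + 1)) ≤
      ‖z - us k‖ ^ 2 / (2 * τ) + E z

open Finset

theorem norm_sub_sq_le_mul_sum_norm_sub_sq {G : Type*} [SeminormedAddCommGroup G]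
    (u : ℕ → G) (n : ℕ) :
    ‖u n - u 0‖ ^ 2 ≤ n * ∑ j ∈ range n, ‖u (j + 1) - u j‖ ^ 2 := by
  calc ‖u n - u 0‖ ^ 2 ≤ (∑ j ∈ range n, ‖u (j + 1) - u j‖) ^ 2 := by
        gcongr
        rw [← sum_range_sub]
        exact norm_sum_le _ _
    _ ≤ n * ∑ j ∈ range n, ‖u (j + 1) - u j‖ ^ 2 := by
        simpa using sq_sum_le_card_mul_sum_sq (s := range n) (f := fun j => ‖u (j + 1) - u j‖)

theorem le_two_mul_sq_mul_of_le_mul_of_sq_le {d M δ τ : ℝ} (hτ : 0 ≤ τ) (hd : d ≤ M * δ)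
    (hδ : δ ^ 2 ≤ 2 * τ * d) : d ≤ 2 * M ^ 2 * τ := by
  rcases le_or_gt d 0 with hd0 | hd0
  · nlinarith [sq_nonneg M]
  · have : d * d ≤ d * (2 * M ^ 2 * τ) :=
      calc d * d ≤ (M * δ) ^ 2 := by nlinarith
        _ = M ^ 2 * δ ^ 2 := by ring
        _ ≤ M ^ 2 * (2 * τ * d) := by gcongr
        _ = d * (2 * M ^ 2 * τ) := by ring
    exact le_of_mul_le_mul_left this hd0

theorem Convex.norm_image_sub_le_of_norm_hasGradientAt_le {f : H → ℝ} {f' : H → H} {s : Set H}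
    {M : ℝ} (hs : Convex ℝ s) (hf : ∀ x ∈ s, HasGradientAt f (f' x) x)
    (bound : ∀ x ∈ s, ‖f' x‖ ≤ M) {x y : H} (hx : x ∈ s) (hy : y ∈ s) :
    ‖f y - f x‖ ≤ M * ‖y - x‖ :=
  hs.norm_image_sub_le_of_norm_hasFDerivWithin_le
    (fun z hz => (hf z hz).hasFDerivAt.hasFDerivWithinAt) (fun z hz => by simpa using bound z hz)
    hx hy

namespace IsMinMovSeq

variable {V : Type*} [NormedAddCommGroup V] {E : V → ℝ} {C : Set V} {τ : ℝ} {u : ℕ → V} {u₀ : V}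

theorem mem (h : IsMinMovSeq E C τ u u₀) (hu₀ : u₀ ∈ C) : ∀ k, u k ∈ C
  | 0 => h.1 ▸ hu₀
  | k + 1 => (h.2 k).1

theorem norm_sub_sq_le (h : IsMinMovSeq E C τ u u₀) (hu₀ : u₀ ∈ C) (hτ : 0 < τ) (k : ℕ) :
    ‖u (k + 1) - u k‖ ^ 2 ≤ 2 * τ * (E (u k) - E (u (k + 1))) := by
  have hmin := (h.2 k).2 (u k) (h.mem hu₀ k)
  rw [sub_self, norm_zero, zero_pow two_ne_zero, zero_div, zero_add] at hmin
  have : ‖u (k + 1) - u k‖ ^ 2 / (2 * τ) ≤ E (u k) - E (u (k + 1)) := by linarith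
  rwa [div_le_iff₀ (by positivity), mul_comm] at this

theorem sum_norm_sub_sq_le (h : IsMinMovSeq E C τ u u₀) (hu₀ : u₀ ∈ C) (hτ : 0 < τ) (n : ℕ) :
    ∑ j ∈ range n, ‖u (j + 1) - u j‖ ^ 2 ≤ 2 * τ * (E u₀ - E (u n)) := by
  induction n with
  | zero => simp [h.1]
  | succ n ih =>
    rw [sum_range_succ]
    linarith [h.norm_sub_sq_le hu₀ hτ n]

theorem norm_sub_le (h : IsMinMovSeq E C τ u u₀) (hu₀ : u₀ ∈ C) (hτ : 0 < τ) {α : ℝ}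
    (hα : ∀ v, α ≤ E v) (n : ℕ) : ‖u n - u₀‖ ≤ √(2 * (n * τ) * (E u₀ - α)) := by
  apply Real.le_sqrt_of_sq_le
  calc ‖u n - u₀‖ ^ 2 ≤ n * ∑ j ∈ range n, ‖u (j + 1) - u j‖ ^ 2 :=
        h.1 ▸ norm_sub_sq_le_mul_sum_norm_sub_sq u n
    _ ≤ n * (2 * τ * (E u₀ - E (u n))) := by gcongr; exact h.sum_norm_sub_sq_le hu₀ hτ n
    _ = 2 * (n * τ) * (E u₀ - E (u n)) := by ring
    _ ≤ 2 * (n * τ) * (E u₀ - α) := by gcongr; exact hα _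

theorem energy_sub_le [InnerProductSpace ℝ V] [CompleteSpace V] (h : IsMinMovSeq E C τ u u₀)
    (hu₀ : u₀ ∈ C) (hτ : 0 < τ) {E' : V → V}
    (hgrad : ∀ w, HasGradientAt E (E' w) w) {M R : ℝ} (hM : ∀ w, ‖w‖ ≤ R → ‖E' w‖ ≤ M)
    {k : ℕ} (hk : ‖u k‖ ≤ R) (hk' : ‖u (k + 1)‖ ≤ R) :
    E (u k) - E (u (k + 1)) ≤ 2 * M ^ 2 * τ := by
  refine le_two_mul_sq_mul_of_le_mul_of_sq_le hτ.le ?_ (h.norm_sub_sq_le hu₀ hτ k)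
  have hball : ∀ w ∈ Metric.closedBall (0 : V) R, ‖E' w‖ ≤ M := fun w hw =>
    hM w (by simpa using hw)
  calc E (u k) - E (u (k + 1)) ≤ ‖E (u k) - E (u (k + 1))‖ := le_abs_self _
    _ ≤ M * ‖u k - u (k + 1)‖ :=
        (convex_closedBall 0 R).norm_image_sub_le_of_norm_hasGradientAt_le
          (fun w _ => hgrad w) hball (by simpa using hk') (by simpa using hk)
    _ = M * ‖u (k + 1) - u k‖ := by rw [norm_sub_rev]

end IsMinMovSeq

theorem rate_of_energy_descent_general
    (E : H → ℝ) (E' : H → H) (α : ℝ) (hE : Assumption1 E E' α)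
    (C : Set H)
    (u₀ : H) (hu₀ : u₀ ∈ C)
    (us : ℝ → ℕ → H) (hus : ∀ τ ∈ Ioo (0:ℝ) 1, IsMinMovSeq E C τ (us τ) u₀) :
    ∀ T : ℝ, 0 < T → ∃ CT : ℝ, 0 < CT ∧
      ∀ τ ∈ Ioo (0:ℝ) 1, ∀ k : ℕ, ((k : ℝ) + 1) * τ ≤ T →
        (E (us τ k) - E (us τ (k + 1))) / τ ≤ CT := by
  intro T hT
  have hβ : 0 ≤ E u₀ - α := sub_nonneg.2 (hE.lowerBound u₀)
  set R := ‖u₀‖ + √(2 * T * (E u₀ - α)) + 1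
  obtain ⟨M, hM⟩ := hE.gradBdd R (by positivity)
  refine ⟨2 * M ^ 2 + 1, by positivity, fun τ hτ k hk => ?_⟩
  have h := hus τ hτ
  have hball : ∀ n : ℕ, (n : ℝ) * τ ≤ T → ‖us τ n‖ ≤ R := fun n hn =>
    calc ‖us τ n‖ ≤ ‖u₀‖ + ‖us τ n - u₀‖ := norm_le_insert' _ _
      _ ≤ ‖u₀‖ + √(2 * T * (E u₀ - α)) := by
          gcongr
          exact (h.norm_sub_le hu₀ hτ.1 hE.lowerBound n).trans (by gcongr)
      _ ≤ R := by linarith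
  have hstep := h.energy_sub_le hu₀ hτ.1 hE.grad hM (hball k (by nlinarith [hτ.1]))
    (hball (k + 1) (by push_cast; linarith))
  rw [div_le_iff₀ hτ.1]
  nlinarith [hτ.1]

/-- **Rate of energy descent.** For a family of minimizing movement sequences
`(u_{kτ})_{k∈ℕ, τ∈(0,1)}` starting at `u₀ ∈ C` and every `T > 0` there is
`C_T = C_T(E, u₀, T) > 0` with `(E(u_{kτ}) - E(u_{(k+1)τ}))/τ ≤ C_T` whenever
`τ ∈ (0,1)` and `(k+1)τ ≤ T`. -/
theorem rate_of_energy_descent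
    (E : H → ℝ) (E' : H → H) (α : ℝ) (hE : Assumption1 E E' α)
    (C : Set H) (hCne : C.Nonempty) (hCcl : IsClosed C) (hCcv : Convex ℝ C)
    (u₀ : H) (hu₀ : u₀ ∈ C)
    (us : ℝ → ℕ → H) (hus : ∀ τ ∈ Ioo (0:ℝ) 1, IsMinMovSeq E C τ (us τ) u₀) :
    ∀ T : ℝ, 0 < T → ∃ CT : ℝ, 0 < CT ∧
      ∀ τ ∈ Ioo (0:ℝ) 1, ∀ k : ℕ, ((k : ℝ) + 1) * τ ≤ T →
        (E (us τ k) - E (us τ (k + 1))) / τ ≤ CT :=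
  rate_of_energy_descent_general E E' α hE C u₀ hu₀ us hus
end
end
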